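/- arXiv:2002.06689 — 3 statements merged into one kernel-verified Lean document; each statement's English description precedes it below -/
import Mathlib

section
/- Let E and F be infinite-dimensional Banach spaces over ℝ with dim F ≤ 2^{dim E}, and let m be a positive integer. Then the set NL(^m E; F) is maximal lineable in L(^m E; F); that is, NL(^m E; F) ∪ {0} contains a linear subspace of L(^m E; F) whose dimension equals dim L(^m E; F). -/
/-!
Fix a basis `(e_i)_{i ∈ ι}` of `E`, so `#ι = dim E`, and split `ι ≃ ι × ℕ`. Each `t : ι → ℝ` gives
the linear functional with `e_i ↦ (k + 1) ‖e_i‖ t γ` for `i ↔ (γ, k)`; it is unbounded on the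
unit vectors `e_i / ‖e_i‖` unless `t = 0`. Multiplying by a fixed nonzero `(m - 1)`-linear map in
the remaining variables embeds `ι → ℝ`, of dimension `2 ^ dim E` (Erdős–Kaplansky), linearly into
`L(^m E; F)` with only discontinuous nonzero values. Conversely, a multilinear map is determined
by its values on tuples of basis vectors, so `dim L(^m E; F) ≤ #F ^ dim E`, and
`#F = max (dim F) 𝔠 ≤ 2 ^ dim E`.
-/

universe u v w

open Cardinal Function

lemma rank_fun_real_of_infinite (ι : Type u) [Infinite ι] :
    Module.rank ℝ (ι → ℝ) = 2 ^ #ι := by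
  rw [rank_fun_infinite, mk_arrow, lift_uzero, mk_real, lift_continuum, ← two_power_aleph0,
    ← power_mul, aleph0_mul_eq (aleph0_le_mk ι)]

lemma lift_mk_eq_max_rank (K : Type w) (V : Type v) [Field K] [AddCommGroup V] [Module K V]
    (hV : ¬FiniteDimensional K V) :
    lift.{w} #V = max (lift.{w} (Module.rank K V)) (lift.{v} #K) := by
  obtain ⟨⟨ι, B⟩⟩ := Module.Free.exists_basis (R := K) (M := V)
  have : Infinite ι := not_finite_iff_infinite.mp fun _ => hV (Module.Finite.of_basis B)
  rw [← B.mk_eq_rank'', ← mk_finsupp_lift_of_infinite, ← lift_umax.{v, w}]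
  exact (lift_mk_eq.{v, max v w, w}.mpr ⟨B.repr.toEquiv⟩).trans (lift_id'.{max v w, w} _)

lemma lift_mk_le_two_pow_rank {E : Type u} {F : Type v} [AddCommGroup E] [Module ℝ E]
    [AddCommGroup F] [Module ℝ F] (hE : ℵ₀ ≤ Module.rank ℝ E) (hF : ¬FiniteDimensional ℝ F)
    (hEF : lift.{u} (Module.rank ℝ F) ≤ lift.{v} (2 ^ Module.rank ℝ E)) :
    lift.{u} #F ≤ lift.{v} (2 ^ Module.rank ℝ E) := by
  have hF' : #F = max (Module.rank ℝ F) 𝔠 := by simpa [mk_real] using lift_mk_eq_max_rank ℝ F hF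
  rw [hF', lift_max, lift_continuum]
  refine max_le hEF ?_
  rw [← two_power_aleph0, lift_power, lift_two]
  exact power_le_power_left two_ne_zero (aleph0_le_lift.mpr hE)

lemma rank_multilinearMap_le_lift_mk_pow (K : Type w) (E : Type u) (F : Type v) [Field K]
    [AddCommGroup E] [Module K E] [AddCommGroup F] [Module K F] (n : ℕ)
    (hE : ℵ₀ ≤ Module.rank K E) :
    Module.rank K (MultilinearMap K (fun _ : Fin n => E) F) ≤
      lift.{u} #F ^ lift.{v} (Module.rank K E) := by
  obtain ⟨⟨ι, B⟩⟩ := Module.Free.exists_basis (R := K) (M := E)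
  let restrict : MultilinearMap K (fun _ : Fin n => E) F →ₗ[K] ((Fin n → ι) → F) :=
    { toFun := fun T v => T (fun k => B (v k))
      map_add' := fun _ _ => rfl
      map_smul' := fun _ _ => rfl }
  have h_inj : Injective restrict := fun T T' h =>
    Module.Basis.ext_multilinear (fun _ => B) fun v => congrFun h v
  have h_index : #(Fin n → ι) ≤ #ι := by
    rw [mk_arrow, lift_uzero, mk_fin, lift_natCast]
    exact power_nat_le (B.mk_eq_rank''.symm ▸ hE)
  calc Module.rank K (MultilinearMap K (fun _ : Fin n => E) F)
      ≤ Module.rank K ((Fin n → ι) → F) := by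
        simpa using LinearMap.lift_rank_le_of_injective restrict h_inj
    _ ≤ #((Fin n → ι) → F) := rank_le_card _ _
    _ ≤ lift.{u} #F ^ lift.{v} (Module.rank K E) := by
        rw [mk_arrow, ← B.mk_eq_rank'']
        exact power_le_power_left (by simp) (lift_le.mpr h_index)

lemma rank_multilinearMap_le_two_pow_rank {E : Type u} {F : Type v} [AddCommGroup E] [Module ℝ E]
    [AddCommGroup F] [Module ℝ F] (hE : ℵ₀ ≤ Module.rank ℝ E) (hF : ¬FiniteDimensional ℝ F)
    (hEF : lift.{u} (Module.rank ℝ F) ≤ lift.{v} (2 ^ Module.rank ℝ E)) (n : ℕ) :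
    Module.rank ℝ (MultilinearMap ℝ (fun _ : Fin n => E) F) ≤ lift.{v} (2 ^ Module.rank ℝ E) := by
  have hκ : ℵ₀ ≤ lift.{v} (Module.rank ℝ E) := aleph0_le_lift.mpr hE
  calc Module.rank ℝ (MultilinearMap ℝ (fun _ : Fin n => E) F)
      ≤ lift.{u} #F ^ lift.{v} (Module.rank ℝ E) := rank_multilinearMap_le_lift_mk_pow ℝ E F n hE
    _ ≤ (2 ^ lift.{v} (Module.rank ℝ E)) ^ lift.{v} (Module.rank ℝ E) := by
        refine power_le_power_right ?_
        simpa [lift_power] using lift_mk_le_two_pow_rank hE hF hEF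
    _ = lift.{v} (2 ^ Module.rank ℝ E) := by
        rw [← power_mul, mul_eq_self hκ, lift_power, lift_two]

section NormedSpace

variable {𝕜 E F : Type*} [NontriviallyNormedField 𝕜] [NormedAddCommGroup E] [NormedSpace 𝕜 E]
  [NormedAddCommGroup F] [NormedSpace 𝕜 F]

lemma LinearMap.not_continuous_of_forall_exists_lt {f : E →ₗ[𝕜] F}
    (h : ∀ C : ℝ, ∃ x, C * ‖x‖ < ‖f x‖) : ¬Continuous f := fun hf => by
  obtain ⟨x, hx⟩ := h ‖(⟨f, hf⟩ : E →L[𝕜] F)‖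
  exact hx.not_ge (ContinuousLinearMap.le_opNorm ⟨f, hf⟩ x)

end NormedSpace

lemma Module.Basis.exists_injective_not_continuous {E ι : Type*} [NormedAddCommGroup E]
    [NormedSpace ℝ E] [Infinite ι] (B : Basis ι ℝ E) :
    ∃ Φ : (ι → ℝ) →ₗ[ℝ] (E →ₗ[ℝ] ℝ), Function.Injective Φ ∧ ∀ t ≠ 0, ¬Continuous (Φ t) := by
  obtain ⟨e⟩ : Nonempty (ι ≃ ι × ℕ) := by
    rw [← Cardinal.eq, mk_prod, lift_uzero, mk_nat, lift_aleph0,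
      mul_aleph0_eq (aleph0_le_mk ι)]
  set c : ι → ℝ := fun i => ((e i).2 + 1) * ‖B i‖
  have hc : ∀ i, c i ≠ 0 := fun i =>
    mul_ne_zero (by positivity) (norm_ne_zero_iff.mpr (B.ne_zero i))
  let Φ := (B.constr ℝ).toLinearMap ∘ₗ LinearMap.mulLeft ℝ c ∘ₗ
    LinearMap.funLeft ℝ ℝ (fun i => (e i).1)
  have hΦ : ∀ t i, Φ t (B i) = c i * t (e i).1 := fun t i => by simp [Φ]
  refine ⟨Φ, ?_, fun t ht => LinearMap.not_continuous_of_forall_exists_lt fun C => ?_⟩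
  · have h_mul : Function.Injective (LinearMap.mulLeft ℝ c) := fun t s h =>
      funext fun i => mul_left_cancel₀ (hc i) (congrFun h i)
    have h_fun : Function.Injective (LinearMap.funLeft ℝ ℝ fun i => (e i).1) :=
      LinearMap.funLeft_injective_of_surjective ℝ ℝ _ (Prod.fst_surjective.comp e.surjective)
    exact (B.constr ℝ).injective.comp (h_mul.comp h_fun)
  · obtain ⟨γ, hγ⟩ := Function.ne_iff.mp ht
    obtain ⟨k, hk⟩ := exists_nat_gt (C / |t γ|)
    have hγ' : 0 < |t γ| := abs_pos.mpr hγ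
    have hB : 0 < ‖B (e.symm (γ, k))‖ := norm_pos_iff.mpr (B.ne_zero _)
    refine ⟨B (e.symm (γ, k)), ?_⟩
    rw [hΦ, norm_mul, Real.norm_eq_abs, Real.norm_eq_abs, abs_of_pos (by positivity)]
    simp only [c, Equiv.apply_symm_apply]
    rw [div_lt_iff₀ hγ'] at hk
    nlinarith

namespace MultilinearMap

section Algebra

variable {K E F : Type*} {n : ℕ}

def prependFunctional [CommRing K] [AddCommGroup E] [Module K E] [AddCommGroup F] [Module K F]
    (S : MultilinearMap K (fun _ : Fin n => E) F) :
    (E →ₗ[K] K) →ₗ[K] MultilinearMap K (fun _ : Fin (n + 1) => E) F :=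
  (multilinearCurryLeftEquiv K (fun _ : Fin (n + 1) => E) F).symm.toLinearMap ∘ₗ
    LinearMap.smulRightₗ.flip S

@[simp]
lemma prependFunctional_apply [CommRing K] [AddCommGroup E] [Module K E] [AddCommGroup F]
    [Module K F] (S : MultilinearMap K (fun _ : Fin n => E) F) (f : E →ₗ[K] K)
    (x : Fin (n + 1) → E) : S.prependFunctional f x = f (x 0) • S (Fin.tail x) :=
  rfl

variable [Field K] [AddCommGroup E] [Module K E] [AddCommGroup F] [Module K F]

lemma injective_prependFunctional {S : MultilinearMap K (fun _ : Fin n => E) F} (hS : S ≠ 0) :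
    Injective S.prependFunctional := by
  obtain ⟨y, hy⟩ : ∃ y, S y ≠ 0 := by simpa [MultilinearMap.ext_iff] using hS
  refine (injective_iff_map_eq_zero _).mpr fun f hf => LinearMap.ext fun v => ?_
  have := congrArg (· (Fin.cons v y)) hf
  simpa [hy] using this

variable (K E F) in
lemma exists_ne_zero [Nontrivial E] [Nontrivial F] (n : ℕ) :
    ∃ S : MultilinearMap K (fun _ : Fin n => E) F, S ≠ 0 := by
  obtain ⟨w, hw⟩ := exists_ne (0 : E)
  obtain ⟨g, hg⟩ : ∃ g : Module.Dual K E, g w ≠ 0 := by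
    simpa using (Module.forall_dual_apply_eq_zero_iff K w).not.mpr hw
  obtain ⟨y, hy⟩ := exists_ne (0 : F)
  refine ⟨(MultilinearMap.mkPiRing K (Fin n) y).compLinearMap fun _ => g, fun h => ?_⟩
  have := congrArg (· fun _ => w) h
  simp [hg, hy] at this

end Algebra

section Topology

variable {𝕜 E F : Type*} [NontriviallyNormedField 𝕜] [CompleteSpace 𝕜] [AddCommGroup E]
  [Module 𝕜 E] [TopologicalSpace E] [AddCommGroup F] [Module 𝕜 F] [TopologicalSpace F]
  [IsTopologicalAddGroup F] [ContinuousSMul 𝕜 F] [T2Space F] {n : ℕ}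

lemma continuous_of_continuous_prependFunctional {S : MultilinearMap 𝕜 (fun _ : Fin n => E) F}
    (hS : S ≠ 0) {f : E →ₗ[𝕜] 𝕜} (hf : Continuous (S.prependFunctional f)) : Continuous f := by
  obtain ⟨y, hy⟩ : ∃ y, S y ≠ 0 := by simpa [MultilinearMap.ext_iff] using hS
  refine (isClosedEmbedding_smul_left hy).continuous_iff.mpr ?_
  have : Continuous fun v => S.prependFunctional f (Fin.cons v y) := hf.comp (by fun_prop)
  simpa [Function.comp_def] using this

end Topology

end MultilinearMap

theorem statement5_general (E : Type u) (F : Type v) [NormedAddCommGroup E] [NormedSpace ℝ E]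
    [NormedAddCommGroup F] [NormedSpace ℝ F]
    (hE : ¬FiniteDimensional ℝ E) (hF : ¬FiniteDimensional ℝ F)
    (hEF : Cardinal.lift.{u} (Module.rank ℝ F) ≤ Cardinal.lift.{v} (2 ^ Module.rank ℝ E))
    (m : ℕ) (hm : 0 < m) :
    ∃ S : Submodule ℝ (MultilinearMap ℝ (fun _ : Fin m => E) F),
      Module.rank ℝ ↥S = Module.rank ℝ (MultilinearMap ℝ (fun _ : Fin m => E) F) ∧
      ∀ T ∈ S, T ≠ 0 → ¬Continuous ⇑T := by
  obtain ⟨n, rfl⟩ := Nat.exists_eq_add_one.mpr hm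
  have : Nontrivial E := not_subsingleton_iff_nontrivial.mp fun _ => hE inferInstance
  have : Nontrivial F := not_subsingleton_iff_nontrivial.mp fun _ => hF inferInstance
  obtain ⟨⟨ι, B⟩⟩ := Module.Free.exists_basis (R := ℝ) (M := E)
  have : Infinite ι := not_finite_iff_infinite.mp fun _ => hE (Module.Finite.of_basis B)
  have hE_rank : ℵ₀ ≤ Module.rank ℝ E := B.mk_eq_rank'' ▸ aleph0_le_mk ι
  obtain ⟨Φ, hΦ_inj, hΦ⟩ := B.exists_injective_not_continuous
  obtain ⟨S, hS⟩ := MultilinearMap.exists_ne_zero ℝ E F n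
  let Ψ := S.prependFunctional ∘ₗ Φ
  have hΨ_inj : Injective Ψ := (MultilinearMap.injective_prependFunctional hS).comp hΦ_inj
  refine ⟨LinearMap.range Ψ, le_antisymm (Submodule.rank_le _) ?_, ?_⟩
  · calc Module.rank ℝ (MultilinearMap ℝ (fun _ : Fin (n + 1) => E) F)
        ≤ lift.{v} (2 ^ Module.rank ℝ E) := rank_multilinearMap_le_two_pow_rank hE_rank hF hEF _
      _ = Module.rank ℝ (LinearMap.range Ψ) := by
        rw [← B.mk_eq_rank'', ← rank_fun_real_of_infinite, ← lift_umax.{u, v},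
          ← lift_id'.{u, v} (Module.rank ℝ (LinearMap.range Ψ))]
        exact (lift_rank_range_of_injective Ψ hΨ_inj).symm
  · rintro _ ⟨t, rfl⟩ hT hT_cont
    exact hΦ t (by rintro rfl; exact hT (map_zero Ψ))
      (MultilinearMap.continuous_of_continuous_prependFunctional hS hT_cont)

/-- If `E`, `F` are infinite-dimensional real Banach spaces with
`dim F ≤ 2 ^ dim E` and `m` is a positive integer, then `NL(^m E; F)` is maximal lineable in
`L(^m E; F)`: there is a subspace of `L(^m E; F)` contained in `NL(^m E; F) ∪ {0}` whose
dimension equals `dim L(^m E; F)`. -/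
theorem statement5 (E : Type u) (F : Type v) [NormedAddCommGroup E] [NormedSpace ℝ E]
    [CompleteSpace E] [NormedAddCommGroup F] [NormedSpace ℝ F] [CompleteSpace F]
    (hE : ¬FiniteDimensional ℝ E) (hF : ¬FiniteDimensional ℝ F)
    (hEF : Cardinal.lift.{u} (Module.rank ℝ F) ≤ Cardinal.lift.{v} (2 ^ Module.rank ℝ E))
    (m : ℕ) (hm : 0 < m) :
    ∃ S : Submodule ℝ (MultilinearMap ℝ (fun _ : Fin m => E) F),
      Module.rank ℝ ↥S = Module.rank ℝ (MultilinearMap ℝ (fun _ : Fin m => E) F) ∧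
      ∀ T ∈ S, T ≠ 0 → ¬Continuous ⇑T :=
  statement5_general E F hE hF hEF m hm
end

section
/- Let E be an infinite-dimensional normed space over ℝ and let F be a nonzero normed space over ℝ with dim E > dim F, and let m be a positive integer. Then the set NL(^m E; F) is (1, 2^{dim E})-lineable in L(^m E; F): every non-continuous m-linear operator T : E×⋯×E → F is contained in a linear subspace S of L(^m E; F) with dim S = 2^{dim E} and S ⊆ NL(^m E; F) ∪ {0}. -/
/-!
Split a Hamel basis `(e_i)_{i ∈ ι}` of `E` into countably many copies of `ι`, `e_{a,n}`. For
`h : ι → ℝ` the functional `ψ_h` with `ψ_h (e_{a,n}) = n ‖e_{a,n}‖ h a` is unbounded unless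
`h = 0`, so `h ↦ ψ_h` embeds `ℝ^ι`, of dimension `2 ^ dim E`, into the algebraic dual with only
`0` continuous. Multiplying by a fixed nonzero `(m-1)`-linear map transports this into
`L(^m E; F)`. Finally, a functional that vanishes on the continuous maps but not on `T` cuts this
embedded space down to a hyperplane, which together with `T` spans the required subspace.
-/

universe u v

open Cardinal Module Submodule

section Lineable

variable {K : Type*} [Field K]

theorem rank_ker_eq_of_finite {M N : Type*} [AddCommGroup M] [Module K M] [AddCommGroup N]
    [Module K N] [Module.Finite K N] (g : M →ₗ[K] N) (hM : ℵ₀ ≤ Module.rank K M) :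
    Module.rank K (LinearMap.ker g) = Module.rank K M := by
  have : Module.Finite K (M ⧸ LinearMap.ker g) := Module.Finite.equiv g.quotKerEquivRange.symm
  exact eq_of_add_eq_of_aleph0_le (rank_quotient_add_rank _)
    ((Module.rank_lt_aleph0 K _).trans_le hM) hM

theorem rank_span_singleton_sup {V : Type*} [AddCommGroup V] [Module K V] (x : V)
    {P : Submodule K V} (hP : ℵ₀ ≤ Module.rank K P) :
    Module.rank K ↥(span K {x} ⊔ P) = Module.rank K P := by
  refine le_antisymm ?_ (Submodule.rank_mono le_sup_right)
  have hx : Module.rank K (span K {x}) ≤ 1 := by simpa using rank_span_le (R := K) {x}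
  calc Module.rank K ↥(span K {x} ⊔ P) ≤ Module.rank K (span K {x}) + Module.rank K P :=
        Submodule.rank_add_le_rank_add_rank _ _
    _ ≤ 1 + Module.rank K P := by gcongr
    _ = Module.rank K P := add_eq_right hP (one_le_aleph0.trans hP)

theorem exists_submodule_mem_disjoint {M : Type u} {V : Type v} [AddCommGroup M] [Module K M]
    [AddCommGroup V] [Module K V] (C : Submodule K V) (Ξ : M →ₗ[K] V)
    (hΞ : ∀ x, Ξ x ∈ C → x = 0) (hM : ℵ₀ ≤ Module.rank K M) {T : V} (hT : T ∉ C) :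
    ∃ S : Submodule K V, T ∈ S ∧
      lift.{u} (Module.rank K S) = lift.{v} (Module.rank K M) ∧ Disjoint S C := by
  obtain ⟨f, hfT, hfC⟩ := C.exists_dual_map_eq_bot_of_notMem hT inferInstance
  have hΞinj : Function.Injective Ξ := by
    rw [← LinearMap.ker_eq_bot, eq_bot_iff]
    exact fun x hx => hΞ x (by simp [LinearMap.mem_ker.mp hx])
  set N := LinearMap.ker (f ∘ₗ Ξ)
  have hN : lift.{u} (Module.rank K (N.map Ξ)) = lift.{v} (Module.rank K M) := by
    rw [← (N.equivMapOfInjective Ξ hΞinj).lift_rank_eq, rank_ker_eq_of_finite _ hM]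
  have hNinf : ℵ₀ ≤ Module.rank K (N.map Ξ) := by
    simpa using (aleph0_le_lift.mpr hM).trans_eq hN.symm
  refine ⟨span K {T} ⊔ N.map Ξ, mem_sup_left (mem_span_singleton_self T), ?_, ?_⟩
  · rwa [rank_span_singleton_sup T hNinf]
  · rw [Submodule.disjoint_def]
    rintro _ hS hC
    obtain ⟨_, ha, _, ⟨n, hn, rfl⟩, rfl⟩ := mem_sup.mp hS
    obtain ⟨a, rfl⟩ := mem_span_singleton.mp ha
    have hfn : f (Ξ n) = 0 := hn
    have ha0 : a = 0 := by
      have : f (a • T + Ξ n) = 0 := LinearMap.le_ker_iff_map.mpr hfC hC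
      simpa [hfn, hfT] using this
    subst ha0
    rw [zero_smul, zero_add] at hC ⊢
    rw [hΞ n hC, map_zero]

end Lineable

namespace Module.Basis

section Algebraic

variable {R M ι α : Type*} [CommSemiring R] [AddCommMonoid M] [Module R M]

noncomputable def weightedConstr (B : Basis ι R M) (p : ι → α) (w : ι → R) :
    (α → R) →ₗ[R] M →ₗ[R] R :=
  (B.constr R).toLinearMap ∘ₗ LinearMap.pi fun i => w i • LinearMap.proj (p i)

theorem weightedConstr_apply_basis (B : Basis ι R M) (p : ι → α) (w : ι → R) (h : α → R)
    (i : ι) : B.weightedConstr p w h (B i) = w i * h (p i) := by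
  simp [weightedConstr]

end Algebraic

theorem eq_zero_of_continuous_weightedConstr {𝕜 E ι α : Type*} [NontriviallyNormedField 𝕜]
    [NormedAddCommGroup E] [NormedSpace 𝕜 E] (B : Basis ι 𝕜 E) (p : ι → α) (w : ι → 𝕜)
    (hw : ∀ a (c : ℝ), ∃ i, p i = a ∧ c * ‖B i‖ < ‖w i‖) {h : α → 𝕜}
    (hc : Continuous (B.weightedConstr p w h)) : h = 0 := by
  funext a
  by_contra ha
  let f : E →L[𝕜] 𝕜 := ⟨B.weightedConstr p w h, hc⟩
  obtain ⟨i, hpi, hi⟩ := hw a (‖f‖ / ‖h a‖)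
  subst hpi
  have hfi : ‖w i‖ * ‖h (p i)‖ ≤ ‖f‖ * ‖B i‖ := by
    simpa [f, weightedConstr_apply_basis] using f.le_opNorm (B i)
  rw [div_mul_eq_mul_div, div_lt_iff₀ (norm_pos_iff.mpr ha)] at hi
  exact hi.not_ge hfi

theorem exists_linearMap_eq_zero_of_continuous {𝕜 E ι : Type*} [RCLike 𝕜]
    [NormedAddCommGroup E] [NormedSpace 𝕜 E] [Infinite ι] (B : Basis ι 𝕜 E) :
    ∃ Ψ : (ι → 𝕜) →ₗ[𝕜] E →ₗ[𝕜] 𝕜, ∀ h, Continuous (Ψ h) → h = 0 := by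
  obtain ⟨q⟩ : Nonempty (ι ≃ ι × ℕ) :=
    Cardinal.eq.mp (by simp [mul_aleph0_eq (aleph0_le_mk ι)])
  refine ⟨B.weightedConstr (fun i => (q i).1) (fun i => ((q i).2 : 𝕜) * ‖B i‖),
    fun h => B.eq_zero_of_continuous_weightedConstr _ _ fun a c => ?_⟩
  obtain ⟨n, hn⟩ := exists_nat_gt c
  refine ⟨q.symm (a, n), by simp, ?_⟩
  simpa using mul_lt_mul_of_pos_right hn (norm_pos_iff.mpr (B.ne_zero (q.symm (a, n))))

end Module.Basis

theorem rank_fun_real_eq_two_pow (ι : Type*) [Infinite ι] :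
    Module.rank ℝ (ι → ℝ) = 2 ^ #ι := by
  rw [rank_fun_infinite, mk_arrow, mk_real, lift_continuum, ← two_power_aleph0, ← power_mul,
    lift_uzero, aleph0_mul_eq (aleph0_le_mk ι)]

namespace MultilinearMap

section Algebraic

variable {R E F : Type*} [CommSemiring R] [AddCommMonoid E] [Module R E] [AddCommMonoid F]
  [Module R F] {k : ℕ}

noncomputable def consSMul (G : MultilinearMap R (fun _ : Fin k => E) F) :
    (E →ₗ[R] R) →ₗ[R] MultilinearMap R (fun _ : Fin (k + 1) => E) F :=
  (multilinearCurryLeftEquiv R (fun _ : Fin (k + 1) => E) F).symm.toLinearMap ∘ₗ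
    LinearMap.smulRightₗ.flip G

@[simp]
theorem consSMul_apply (G : MultilinearMap R (fun _ : Fin k => E) F) (ψ : E →ₗ[R] R)
    (x : Fin (k + 1) → E) : G.consSMul ψ x = ψ (x 0) • G (Fin.tail x) := by
  simp [consSMul]

end Algebraic

theorem exists_apply_ne_zero {K E F : Type*} [Field K] [AddCommGroup E] [Module K E]
    [AddCommGroup F] [Module K F] [Nontrivial E] [Nontrivial F] (k : ℕ) :
    ∃ (G : MultilinearMap K (fun _ : Fin k => E) F) (y : Fin k → E), G y ≠ 0 := by
  obtain ⟨e, he⟩ := exists_ne (0 : E)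
  obtain ⟨v, hv⟩ := exists_ne (0 : F)
  obtain ⟨φ, hφ⟩ := Module.Projective.exists_dual_eq_one K he
  exact ⟨(MultilinearMap.mkPiRing K (Fin k) v).compLinearMap fun _ => φ, fun _ => e, by simpa [hφ]⟩

variable {𝕜 E F : Type*} [NontriviallyNormedField 𝕜] [NormedAddCommGroup E] [NormedSpace 𝕜 E]
  [NormedAddCommGroup F] [NormedSpace 𝕜 F] {k : ℕ}

variable (𝕜 F) in
def continuousSubmodule (M : Fin k → Type*) [∀ i, NormedAddCommGroup (M i)]
    [∀ i, NormedSpace 𝕜 (M i)] : Submodule 𝕜 (MultilinearMap 𝕜 M F) where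
  carrier := {f | Continuous f}
  add_mem' hf hg := hf.add hg
  zero_mem' := continuous_const
  smul_mem' c _ hf := hf.const_smul c

theorem continuous_of_continuous_consSMul [CompleteSpace 𝕜]
    {G : MultilinearMap 𝕜 (fun _ : Fin k => E) F} {y : Fin k → E} (hy : G y ≠ 0)
    {ψ : E →ₗ[𝕜] 𝕜} (hψ : Continuous (G.consSMul ψ)) : Continuous ψ := by
  have : (fun x => ψ x • G y) = G.consSMul ψ ∘ fun x => Fin.cons x y := by
    funext x; simp
  refine (isClosedEmbedding_smul_left hy).continuous_iff.mpr ?_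
  exact this ▸ hψ.comp (continuous_id.finCons continuous_const)

end MultilinearMap

theorem statement8_general (E : Type u) (F : Type v) [NormedAddCommGroup E] [NormedSpace ℝ E]
    [NormedAddCommGroup F] [NormedSpace ℝ F] [Nontrivial F]
    (hE : ¬FiniteDimensional ℝ E)
    (m : ℕ) (hm : 0 < m)
    (T : MultilinearMap ℝ (fun _ : Fin m => E) F) (hT : ¬Continuous ⇑T) :
    ∃ S : Submodule ℝ (MultilinearMap ℝ (fun _ : Fin m => E) F),
      T ∈ S ∧ Module.rank ℝ ↥S = Cardinal.lift.{v} (2 ^ Module.rank ℝ E) ∧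
      ∀ R ∈ S, R ≠ 0 → ¬Continuous ⇑R := by
  obtain ⟨k, rfl⟩ := Nat.exists_eq_add_one_of_ne_zero hm.ne'
  let B := Basis.ofVectorSpace ℝ E
  have : Infinite (Basis.ofVectorSpaceIndex ℝ E) :=
    not_finite_iff_infinite.mp fun _ => hE (Module.Finite.of_basis B)
  have : Nontrivial E := ⟨⟨B (Classical.arbitrary _), 0, B.ne_zero _⟩⟩
  obtain ⟨Ψ, hΨ⟩ := B.exists_linearMap_eq_zero_of_continuous
  obtain ⟨G, y, hG⟩ := MultilinearMap.exists_apply_ne_zero (K := ℝ) (E := E) (F := F) k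
  obtain ⟨S, hTS, hS, hSC⟩ := exists_submodule_mem_disjoint
    (MultilinearMap.continuousSubmodule ℝ F fun _ : Fin (k + 1) => E) (G.consSMul ∘ₗ Ψ)
    (fun h hc => hΨ h (MultilinearMap.continuous_of_continuous_consSMul hG hc))
    (by rw [rank_fun_real_eq_two_pow]; exact (aleph0_le_mk _).trans (cantor _).le) hT
  refine ⟨S, hTS, ?_, fun R hR hR0 hRc => hR0 (Submodule.disjoint_def.mp hSC R hR hRc)⟩
  rwa [rank_fun_real_eq_two_pow, B.mk_eq_rank'', lift_id'.{u, v}, lift_two_power, lift_umax,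
    ← lift_two_power] at hS

/-- Let `E` be an infinite-dimensional real normed space and `F` a nonzero real
normed space with `dim E > dim F`, and let `m` be a positive integer. Then `NL(^m E; F)` is
`(1, 2 ^ dim E)`-lineable in `L(^m E; F)`: every non-continuous `m`-linear operator
`T : E × ⋯ × E → F` lies in a subspace `S` of `L(^m E; F)` with `dim S = 2 ^ dim E` and
`S ⊆ NL(^m E; F) ∪ {0}`. -/
theorem statement8 (E : Type u) (F : Type v) [NormedAddCommGroup E] [NormedSpace ℝ E]
    [NormedAddCommGroup F] [NormedSpace ℝ F] [Nontrivial F]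
    (hE : ¬FiniteDimensional ℝ E)
    (hEF : Cardinal.lift.{u} (Module.rank ℝ F) < Cardinal.lift.{v} (Module.rank ℝ E))
    (m : ℕ) (hm : 0 < m)
    (T : MultilinearMap ℝ (fun _ : Fin m => E) F) (hT : ¬Continuous ⇑T) :
    ∃ S : Submodule ℝ (MultilinearMap ℝ (fun _ : Fin m => E) F),
      T ∈ S ∧ Module.rank ℝ ↥S = Cardinal.lift.{v} (2 ^ Module.rank ℝ E) ∧
      ∀ R ∈ S, R ≠ 0 → ¬Continuous ⇑R :=
  statement8_general E F hE m hm T hT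
end

section
/- Let E be an infinite-dimensional normed space over ℝ, let F be a normed space over ℝ with dim E > dim F ≥ 1, and let m be a positive integer. Then 2^{dim E} = dim L(^m E; F); consequently the cardinal 2^{dim E} in the (1, 2^{dim E})-lineability of NL(^m E; F) cannot be replaced by any bigger cardinal. -/
/-!
Let `κ = dim E ≥ ℵ₀`. A multilinear map is determined by its values on tuples of basis vectors,
so `#L(^m E; F) ≤ #F ^ κ ≤ (#K ^ κ) ^ κ = #K ^ κ`, where `#F ≤ #K ^ κ` uses `dim F ≤ κ`.
Conversely, currying in the first variable identifies `L(^m E; F)` with the linear maps from `E`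
to the nontrivial space `L(^(m-1) E; F)`, which contain a copy of the dual `E*`; by the
Erdős–Kaplansky theorem `dim E* = #E* = #K ^ κ`. Over `ℝ`, `𝔠 ^ κ = 2 ^ κ`.
-/

universe u v w

open Cardinal

theorem Cardinal.continuum_power_eq_two_power {κ : Cardinal} (hκ : ℵ₀ ≤ κ) : 𝔠 ^ κ = 2 ^ κ := by
  rw [← two_power_aleph0, ← power_mul, aleph0_mul_eq hκ]

theorem Cardinal.mk_fin_arrow_le {ι : Type u} [Infinite ι] (m : ℕ) : #(Fin m → ι) ≤ #ι := by
  rw [mk_arrow, mk_fin, lift_natCast, lift_uzero, power_natCast]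
  exact power_nat_le (aleph0_le_mk ι)

theorem MultilinearMap.cardinalMk_le_of_basis {R : Type*} [CommSemiring R] {ι : Type*} [Finite ι]
    {β E : Type u} {F : Type v} [AddCommMonoid E] [Module R E] [AddCommMonoid F] [Module R F]
    (b : Module.Basis β R E) :
    #(MultilinearMap R (fun _ : ι => E) F) ≤ #((ι → β) → F) :=
  mk_le_of_injective (f := fun (f : MultilinearMap R (fun _ : ι => E) F) v => f fun i => b (v i))
    fun _ _ h => Module.Basis.ext_multilinear (fun _ => b) (congrFun h)

instance MultilinearMap.nontrivial {K : Type*} [Field K] {ι : Type*} [Fintype ι] {E F : Type*}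
    [AddCommGroup E] [Module K E] [AddCommGroup F] [Module K F] [Nontrivial E] [Nontrivial F] :
    Nontrivial (MultilinearMap K (fun _ : ι => E) F) := by
  obtain ⟨e, he⟩ := exists_ne (0 : E)
  obtain ⟨y, hy⟩ := exists_ne (0 : F)
  obtain ⟨φ, hφ⟩ := Module.Projective.exists_dual_eq_one K he
  refine ⟨(MultilinearMap.mkPiRing K ι y).compLinearMap (fun _ => φ), 0, fun h => hy ?_⟩
  simpa [hφ] using congr($h fun _ => e)

section Field

variable (K : Type w) [Field K]

theorem Module.lift_cardinalMk_le_lift_cardinalMk_field_pow_lift_rank (V : Type u)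
    [AddCommGroup V] [Module K V] :
    lift.{w} #V ≤ lift.{u} #K ^ lift.{w} (Module.rank K V) := by
  obtain ⟨⟨ι, b⟩⟩ := Module.Free.exists_basis (R := K) (M := V)
  have hinj : Function.Injective fun x : V => ⇑(b.repr x) :=
    DFunLike.coe_injective.comp b.repr.injective
  have key := lift_mk_le_lift_mk_of_injective hinj
  rwa [lift_umax, lift_id'.{u, w}, mk_arrow, b.mk_eq_rank''] at key

variable {E : Type u} {F : Type v} [AddCommGroup E] [Module K E] [AddCommGroup F] [Module K F]

theorem Module.rank_dual_eq_lift_cardinalMk_field_pow_lift_rank (h : ℵ₀ ≤ Module.rank K E) :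
    Module.rank K (E →ₗ[K] K) = lift.{u} #K ^ lift.{w} (Module.rank K E) := by
  obtain ⟨⟨ι, b⟩⟩ := Module.Free.exists_basis (R := K) (M := E)
  rw [rank_dual_eq_card_dual_of_aleph0_le_rank h, ← (b.constr K).toEquiv.cardinal_eq, mk_arrow,
    b.mk_eq_rank'']

theorem LinearMap.lift_rank_dual_le_lift_rank_of_nontrivial [Nontrivial F] :
    lift.{v} (Module.rank K (E →ₗ[K] K)) ≤ lift.{w} (Module.rank K (E →ₗ[K] F)) := by
  obtain ⟨x, hx⟩ := exists_ne (0 : F)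
  have hinj : Function.Injective
      (LinearMap.compRight K (M := E) (LinearMap.toSpanSingleton K F x)) :=
    fun _ _ h => (LinearMap.cancel_left (smul_left_injective K hx)).mp h
  -- The two sides carry different lift levels; in the common universe `lift_lift` identifies them.
  have key := lift_le.{max u v w}.mpr (LinearMap.lift_rank_le_of_injective _ hinj)
  rw [← lift_le.{max u v w}]
  simp only [lift_lift] at key ⊢
  exact key

theorem lift_rank_dual_le_lift_rank_multilinearMap [Nontrivial E] [Nontrivial F] {m : ℕ}
    (hm : 0 < m) :
    lift.{v} (Module.rank K (E →ₗ[K] K)) ≤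
      lift.{w} (Module.rank K (MultilinearMap K (fun _ : Fin m => E) F)) := by
  obtain ⟨n, rfl⟩ := Nat.exists_eq_succ_of_ne_zero hm.ne'
  rw [(multilinearCurryLeftEquiv K (fun _ : Fin (n + 1) => E) F).rank_eq]
  have key := lift_le.{max u v w}.mpr <| LinearMap.lift_rank_dual_le_lift_rank_of_nontrivial K
    (E := E) (F := MultilinearMap K (fun _ : Fin n => E) F)
  rw [← lift_le.{max u v w}]
  simp only [lift_lift] at key ⊢
  exact key

theorem lift_rank_multilinearMap_le (hE : ℵ₀ ≤ Module.rank K E)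
    (hEF : lift.{u} (Module.rank K F) ≤ lift.{v} (Module.rank K E)) (m : ℕ) :
    lift.{w} (Module.rank K (MultilinearMap K (fun _ : Fin m => E) F)) ≤
      lift.{max u v} #K ^ lift.{max v w} (Module.rank K E) := by
  obtain ⟨⟨ι, b⟩⟩ := Module.Free.exists_basis (R := K) (M := E)
  have : Infinite ι := by rw [← aleph0_le_mk_iff, b.mk_eq_rank'']; exact hE
  set κ : Cardinal.{max u v w} := lift.{max v w} (Module.rank K E) with hκ
  have hκ₀ : ℵ₀ ≤ κ := by rw [hκ, ← lift_aleph0.{max v w, u}, lift_le]; exact hE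
  have hK : lift.{max u v} #K ≠ 0 := by simp
  have hF : lift.{max u w} #F ≤ lift.{max u v} #K ^ κ :=
    calc lift.{max u w} #F = lift.{u} (lift.{w} #F) := (lift_lift _).symm
      _ ≤ lift.{u} (lift.{v} #K ^ lift.{w} (Module.rank K F)) :=
        lift_le.mpr (Module.lift_cardinalMk_le_lift_cardinalMk_field_pow_lift_rank K F)
      _ = lift.{max u v} #K ^ lift.{w} (lift.{u} (Module.rank K F)) := by
        rw [lift_power, lift_lift, lift_lift, lift_lift]
      _ ≤ lift.{max u v} #K ^ κ := by
        rw [hκ, ← lift_lift.{v, w}]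
        exact power_le_power_left hK (lift_le.mpr hEF)
  calc lift.{w} (Module.rank K (MultilinearMap K (fun _ : Fin m => E) F))
      ≤ lift.{w} #((Fin m → ι) → F) :=
        lift_le.mpr ((rank_le_card K _).trans (MultilinearMap.cardinalMk_le_of_basis b))
    _ = lift.{max u w} #F ^ lift.{max v w} #(Fin m → ι) := by rw [mk_arrow]; simp
    _ ≤ (lift.{max u v} #K ^ κ) ^ κ := by
        refine power_le_power_right hF |>.trans (power_le_power_left (power_ne_zero _ hK) ?_)
        rw [hκ, ← b.mk_eq_rank'', lift_le]
        exact mk_fin_arrow_le m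
    _ = lift.{max u v} #K ^ κ := by rw [← power_mul, mul_eq_self hκ₀]

theorem lift_rank_multilinearMap_eq (hE : ℵ₀ ≤ Module.rank K E) [Nontrivial F]
    (hEF : lift.{u} (Module.rank K F) ≤ lift.{v} (Module.rank K E)) {m : ℕ} (hm : 0 < m) :
    lift.{w} (Module.rank K (MultilinearMap K (fun _ : Fin m => E) F)) =
      lift.{max u v} #K ^ lift.{max v w} (Module.rank K E) := by
  have : Nontrivial E := rank_pos_iff_nontrivial.mp (aleph0_pos.trans_le hE)
  refine le_antisymm (lift_rank_multilinearMap_le K hE hEF m) ?_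
  have key := lift_rank_dual_le_lift_rank_multilinearMap K (E := E) (F := F) hm
  rwa [Module.rank_dual_eq_lift_cardinalMk_field_pow_lift_rank K hE, lift_power, lift_lift,
    lift_lift] at key

end Field

/-- Let `E` be an infinite-dimensional real normed space, `F` a real normed space
with `dim E > dim F ≥ 1`, and `m` a positive integer. Then
`2 ^ dim E = dim L(^m E; F)`, so the cardinal `2 ^ dim E` in the `(1, 2 ^ dim E)`-lineability
of `NL(^m E; F)` cannot be replaced by any bigger cardinal. -/
theorem statement9 (E : Type u) (F : Type v) [NormedAddCommGroup E] [NormedSpace ℝ E]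
    [NormedAddCommGroup F] [NormedSpace ℝ F]
    (hE : ¬FiniteDimensional ℝ E)
    (hF : 1 ≤ Module.rank ℝ F)
    (hEF : Cardinal.lift.{u} (Module.rank ℝ F) < Cardinal.lift.{v} (Module.rank ℝ E))
    (m : ℕ) (hm : 0 < m) :
    Cardinal.lift.{v} (2 ^ Module.rank ℝ E) =
      Module.rank ℝ (MultilinearMap ℝ (fun _ : Fin m => E) F) := by
  have hE' : ℵ₀ ≤ Module.rank ℝ E := not_lt.mp (mt Module.rank_lt_aleph0_iff.mp hE)
  have : Nontrivial F := rank_pos_iff_nontrivial.mp (zero_lt_one.trans_le hF)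
  have key := lift_rank_multilinearMap_eq ℝ hE' hEF.le hm
  rw [lift_uzero, mk_real, lift_continuum, continuum_power_eq_two_power (by simpa using hE'),
    ← lift_two.{v}, ← lift_power] at key
  exact key.symm
end
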